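/- Let λ, μ, γ be real numbers with λ + μ + γ ≠ 0, and let M(λ,μ,γ) be the 3×3 real matrix whose rows are (λ,λ,λ), (μ,μ,μ), (γ,γ,γ). If λμγ ≠ 0, λμ(λ+μ)(λ+μ+γ) < 0 and γ(λ+μ) < 0, then the evolution algebra E_{M(λ,μ,γ)} is isomorphic to the evolution algebra E₉ whose structure matrix has rows (1,0,0), (−1,0,0), (−1,0,0). -/
import Mathlib


/-- Evolution algebra multiplication on ℝ³ determined by a structure matrix `A`:
`(x ∗_A y) j = ∑ i, x i * y i * A i j`. -/
def evolMul (A : Matrix (Fin 3) (Fin 3) ℝ) (x y : Fin 3 → ℝ) : Fin 3 → ℝ :=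
  fun j => ∑ i, x i * y i * A i j

/-- The evolution algebras with structure matrices `A` and `B` are isomorphic:
there is an ℝ-linear equivalence of ℝ³ intertwining the two multiplications. -/
def EvolIso (A B : Matrix (Fin 3) (Fin 3) ℝ) : Prop :=
  ∃ f : (Fin 3 → ℝ) ≃ₗ[ℝ] (Fin 3 → ℝ),
    ∀ x y, f (evolMul A x y) = evolMul B (f x) (f y)

set_option maxHeartbeats 1000000 in
/-- Auxiliary lemma: the explicit matrix `F` intertwines the two evolution
multiplications. -/
lemma evol_key (l m g a e : ℝ) (ha0 : 0 < a)
    (ha2 : a^2 = -(l*(m+g))) (he2 : e^2 = l*m*g*(l+m+g))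
    (hinv : Invertible (!![l, m, g; a, l*m/a, -a - l*m/a; 0, e/a, -(e/a)] : Matrix (Fin 3) (Fin 3) ℝ)) :
    ∀ x y, (Matrix.toLinearEquiv' _ hinv) (evolMul (!![l, l, l; m, m, m; g, g, g]) x y)
      = evolMul (!![1, 0, 0; -1, 0, 0; -1, 0, 0])
          ((Matrix.toLinearEquiv' _ hinv) x) ((Matrix.toLinearEquiv' _ hinv) y) := by
  intro x y
  have happ : ∀ z, (Matrix.toLinearEquiv' _ hinv) z
      = (!![l, m, g; a, l*m/a, -a - l*m/a; 0, e/a, -(e/a)] : Matrix (Fin 3) (Fin 3) ℝ).mulVec z :=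
    fun z => rfl
  funext j
  rw [happ, happ, happ]
  fin_cases j
  · simp [evolMul, Matrix.mulVec, dotProduct, Fin.sum_univ_three,
      Matrix.vecHead, Matrix.vecTail]
    field_simp
    linear_combination
      ((l+m+g)*(l*x 0*y 0+m*x 1*y 1+g*x 2*y 2)
        - (l*x 0+m*x 1+g*x 2)*(l*y 0+m*y 1+g*y 2)
        + (x 0-x 2)*(a^2*y 0+l*m*y 1-(a^2+l*m)*y 2)
        + ((-(l*(m+g)))*x 0+l*m*x 1-((-(l*(m+g)))+l*m)*x 2)*(y 0-y 2)) * ha2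
      + ((x 1-x 2)*(y 1-y 2)) * he2
  · simp [evolMul, Matrix.mulVec, dotProduct, Fin.sum_univ_three,
      Matrix.vecHead, Matrix.vecTail]
    field_simp
    ring
  · simp [evolMul, Matrix.mulVec, dotProduct, Fin.sum_univ_three,
      Matrix.vecHead, Matrix.vecTail]

theorem stmt (l m g : ℝ) (hsum : l + m + g ≠ 0)
    (h1 : l * m * g ≠ 0) (h2 : l * m * (l + m) * (l + m + g) < 0)
    (h3 : g * (l + m) < 0) :
    EvolIso (!![l, l, l; m, m, m; g, g, g] : Matrix (Fin 3) (Fin 3) ℝ) (!![1, 0, 0; -1, 0, 0; -1, 0, 0] : Matrix (Fin 3) (Fin 3) ℝ) := by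
  have hl : l ≠ 0 := fun h => by simp [h] at h1
  have hlm : l + m ≠ 0 := fun h0 => by simp [h0] at h3
  have hA : 0 < -(l*(m+g)) := by
    rcases hl.lt_or_gt with hl'|hl' <;> rcases hlm.lt_or_gt with hp|hp <;>
      nlinarith [h2, h3, sq_nonneg (l+m), sq_nonneg l, mul_pos_of_neg_of_neg h2 h3,
        sq_nonneg (l+m+g), sq_nonneg m, sq_nonneg g, sq_nonneg (m+g)]
  have hD : 0 < l*m*g*(l+m+g) := by
    have h := mul_pos_of_neg_of_neg h2 h3
    have hsq : 0 < (l+m)^2 := by positivity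
    nlinarith [h, hsq]
  obtain ⟨a, ha0, ha2⟩ : ∃ a : ℝ, 0 < a ∧ a^2 = -(l*(m+g)) :=
    ⟨Real.sqrt (-(l*(m+g))), Real.sqrt_pos.mpr hA, Real.sq_sqrt hA.le⟩
  obtain ⟨e, he0, he2⟩ : ∃ e : ℝ, 0 < e ∧ e^2 = l*m*g*(l+m+g) :=
    ⟨Real.sqrt (l*m*g*(l+m+g)), Real.sqrt_pos.mpr hD, Real.sq_sqrt hD.le⟩
  have hdet : IsUnit (!![l, m, g; a, l*m/a, -a - l*m/a; 0, e/a, -(e/a)] : Matrix (Fin 3) (Fin 3) ℝ).det := by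
    have hd : (!![l, m, g; a, l*m/a, -a - l*m/a; 0, e/a, -(e/a)] : Matrix (Fin 3) (Fin 3) ℝ).det
        = e * (l + m + g) := by
      rw [Matrix.det_fin_three]
      simp [Matrix.vecHead, Matrix.vecTail]
      field_simp
      ring
    rw [hd]
    exact (mul_ne_zero he0.ne' hsum).isUnit
  have hinv : Invertible (!![l, m, g; a, l*m/a, -a - l*m/a; 0, e/a, -(e/a)] : Matrix (Fin 3) (Fin 3) ℝ) :=
    Matrix.invertibleOfIsUnitDet _ hdet
  exact ⟨Matrix.toLinearEquiv' _ hinv, evol_key l m g a e ha0 ha2 he2 hinv⟩
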